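/- arXiv:1810.06299 — 6 statements merged into one kernel-verified Lean document; each statement's English description precedes it below -/
import Mathlib

section
/- For every integer n ≥ 3, the derivative of dgn_n(α) = π − arctan( cos²(π/n)·(sin(π/n)+1)⁻²·tan α ) at α = 3π/4 − π/(2n) equals −1. -/
/-! Write θ = π/n. Since cos²θ = (1 - sin θ)(1 + sin θ), the constant in `dgn n` is
C = (1 - sin θ)/(1 + sin θ), and the derivative of arctan (C tan α) is C / (cos²α + C² sin²α).
At α = 3π/4 - θ/2 we have cos²α = (1 - sin θ)/2 and sin²α = (1 + sin θ)/2, so the denominator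
also equals C; it is nonzero because 0 < θ < π/2. -/

open Real

noncomputable def dgn (n : ℕ) (α : ℝ) : ℝ :=
  π - Real.arctan ((Real.cos (π/n))^2 * ((Real.sin (π/n) + 1)^2)⁻¹ * Real.tan α)

theorem hasDerivAt_arctan_const_mul_tan (C : ℝ) {α : ℝ} (hα : cos α ≠ 0) :
    HasDerivAt (fun x => arctan (C * tan x)) (C / (cos α ^ 2 + C ^ 2 * sin α ^ 2)) α := by
  refine ((hasDerivAt_arctan _).comp α ((hasDerivAt_tan hα).const_mul C)).congr_deriv ?_
  rw [tan_eq_sin_div_cos]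
  field_simp

theorem cos_sq_three_pi_div_four_sub_half (θ : ℝ) :
    cos (3 * π / 4 - θ / 2) ^ 2 = (1 - sin θ) / 2 := by
  have h : 2 * (3 * π / 4 - θ / 2) = π + (π / 2 - θ) := by ring
  rw [cos_sq, h, cos_add, cos_pi, sin_pi, cos_pi_div_two_sub]
  ring

theorem sin_sq_three_pi_div_four_sub_half (θ : ℝ) :
    sin (3 * π / 4 - θ / 2) ^ 2 = (1 + sin θ) / 2 := by
  linarith [sin_sq_add_cos_sq (3 * π / 4 - θ / 2), cos_sq_three_pi_div_four_sub_half θ]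

theorem cos_sq_mul_inv_sin_add_one_sq {θ : ℝ} (h : sin θ + 1 ≠ 0) :
    cos θ ^ 2 * ((sin θ + 1) ^ 2)⁻¹ = (1 - sin θ) / (1 + sin θ) := by
  have h' : 1 + sin θ ≠ 0 := by rwa [add_comm]
  rw [cos_sq']
  field_simp
  ring

theorem stmt4 (n : ℕ) (hn : 3 ≤ n) :
    HasDerivAt (dgn n) (-1) (3*π/4 - π/(2*n)) := by
  have hθ_pos : 0 < π / n := by positivity
  have hθ_lt : π / n < π / 2 := by
    gcongr
    exact_mod_cast (show 2 < n by omega)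
  have hs_lt : sin (π / n) < 1 := by
    rw [← sin_pi_div_two]
    exact sin_lt_sin_of_lt_of_le_pi_div_two (by linarith [pi_pos]) le_rfl hθ_lt
  have hs_pos : 0 < sin (π / n) := sin_pos_of_pos_of_lt_pi hθ_pos (by linarith)
  have hα : 3 * π / 4 - π / (2 * n) = 3 * π / 4 - (π / n) / 2 := by ring
  have hcos_sq := cos_sq_three_pi_div_four_sub_half (π / n)
  have hsin_sq := sin_sq_three_pi_div_four_sub_half (π / n)
  have hcos : cos (3 * π / 4 - (π / n) / 2) ≠ 0 := by
    intro h
    rw [h] at hcos_sq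
    linarith
  rw [hα]
  refine ((hasDerivAt_arctan_const_mul_tan _ hcos).const_sub π).congr_deriv ?_
  rw [hcos_sq, hsin_sq, cos_sq_mul_inv_sin_add_one_sq (by linarith)]
  have h_sub : 1 - sin (π / n) ≠ 0 := by linarith
  have h_add : 1 + sin (π / n) ≠ 0 := by linarith
  field_simp
  ring
end

section
/- Let n ≥ 3 be an integer and suppose 3π/4 − π/(2n) < α < π < γ < 5π/4 − π/(2n) and 2π − π/n < α + γ. Then the axis of the quadratic f(x) = x² − cot(π/n)(cot α + cot γ)x − cot α cot γ, namely (1/2)·cot(π/n)·(cot α + cot γ), is strictly greater than (1/2)·cot(π/n)·(cot α + cot(dgn_n(α))) whenever γ < dgn_n(α), and moreover (1/2)·cot(π/n)·(cot α + cot(dgn_n(α))) = −sec(π/n)·(sin(π/n)+1)·cot α. -/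
/-! Since `cot (π - arctan t) = -t⁻¹`, with `s = sin (π/n)`, `c = cos (π/n)` one gets
`cot (dgn n α) = -((s + 1)² / c²) cot α`, and the identity reduces to `c² - (s + 1)² = -2s(s + 1)`.
The inequality holds because `cot` is strictly decreasing on `(π, 3π/2) ∋ γ, dgn n α`
and `cot (π/n) > 0`. -/

open Real Set

namespace Real

lemma cot_periodic : Function.Periodic cot π := fun x => by
  rw [← tan_inv_eq_cot, ← tan_inv_eq_cot, tan_periodic x]

lemma cot_pi_sub (x : ℝ) : cot (π - x) = -cot x := by
  rw [← tan_inv_eq_cot, ← tan_inv_eq_cot, tan_pi_sub, inv_neg]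

lemma cot_pos_of_pos_of_lt_pi_div_two {x : ℝ} (h0 : 0 < x) (hx : x < π / 2) : 0 < cot x := by
  rw [cot_eq_cos_div_sin]
  exact div_pos (cos_pos_of_mem_Ioo ⟨by linarith, hx⟩) (sin_pos_of_pos_of_lt_pi h0 (by linarith))

lemma strictAntiOn_cot : StrictAntiOn cot (Ioo 0 π) := by
  intro x ⟨hx0, hxπ⟩ y ⟨hy0, hyπ⟩ hxy
  have hsx := sin_pos_of_pos_of_lt_pi hx0 hxπ
  have hsy := sin_pos_of_pos_of_lt_pi hy0 hyπ
  have hsub : 0 < sin (y - x) := sin_pos_of_pos_of_lt_pi (by linarith) (by linarith)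
  rw [cot_eq_cos_div_sin, cot_eq_cos_div_sin, div_lt_div_iff₀ hsy hsx]
  rw [sin_sub] at hsub
  linarith

lemma cot_lt_cot_of_pi_lt {x y : ℝ} (hx : π < x) (hxy : x < y) (hy : y < 2 * π) :
    cot y < cot x := by
  have h := strictAntiOn_cot (a := x - π) (b := y - π)
    ⟨by linarith, by linarith⟩ ⟨by linarith, by linarith⟩ (by linarith)
  rwa [cot_periodic.sub_eq, cot_periodic.sub_eq] at h

end Real

lemma pi_div_natCast_lt_pi_div_two {n : ℕ} (hn : 3 ≤ n) : π / n < π / 2 := by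
  have hn' : (2 : ℝ) < n := by exact_mod_cast hn
  exact div_lt_div_of_pos_left pi_pos two_pos hn'

lemma dgn_lt_three_pi_div_two (n : ℕ) (α : ℝ) : dgn n α < 3 * π / 2 := by
  have := neg_pi_div_two_lt_arctan ((cos (π/n))^2 * ((sin (π/n) + 1)^2)⁻¹ * tan α)
  rw [dgn]
  linarith

-- No hypothesis on `α`: where `tan α = 0`, both cotangents take the junk value `0 = 0⁻¹`.
lemma cot_dgn (n : ℕ) (α : ℝ) :
    cot (dgn n α) = -((sin (π/n) + 1)^2 / cos (π/n)^2) * cot α := by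
  rw [dgn, cot_pi_sub, ← tan_inv_eq_cot, tan_arctan, ← tan_inv_eq_cot, mul_inv, mul_inv, inv_inv]
  ring

lemma half_cot_mul_cot_add_cot_dgn {n : ℕ} (hs : sin (π/n) ≠ 0) (hc : cos (π/n) ≠ 0) (α : ℝ) :
    (1/2) * cot (π/n) * (cot α + cot (dgn n α))
      = -(cos (π/n))⁻¹ * (sin (π/n) + 1) * cot α := by
  rw [cot_dgn, cot_eq_cos_div_sin (π/n)]
  field_simp
  linear_combination cot α * sin_sq_add_cos_sq (π/n)

theorem stmt10_general (n : ℕ) (hn : 3 ≤ n) (α γ : ℝ)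
    (h3 : π < γ) :
    (γ < dgn n α →
      (1/2) * Real.cot (π/n) * (Real.cot α + Real.cot γ)
        > (1/2) * Real.cot (π/n) * (Real.cot α + Real.cot (dgn n α))) ∧
    (1/2) * Real.cot (π/n) * (Real.cot α + Real.cot (dgn n α))
      = -(Real.cos (π/n))⁻¹ * (Real.sin (π/n) + 1) * Real.cot α := by
  have hθ0 : 0 < π / n := by positivity
  have hθ : π / n < π / 2 := pi_div_natCast_lt_pi_div_two hn
  have hs : sin (π / n) ≠ 0 := (sin_pos_of_pos_of_lt_pi hθ0 (by linarith)).ne'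
  have hc : cos (π / n) ≠ 0 := (cos_pos_of_mem_Ioo ⟨by linarith, hθ⟩).ne'
  refine ⟨fun hγ => ?_, half_cot_mul_cot_add_cot_dgn hs hc α⟩
  have hcot : cot (dgn n α) < cot γ :=
    cot_lt_cot_of_pi_lt h3 hγ (by linarith [dgn_lt_three_pi_div_two n α, pi_pos])
  have hcotθ : 0 < 1 / 2 * cot (π / n) := by
    have := cot_pos_of_pos_of_lt_pi_div_two hθ0 hθ
    positivity
  exact mul_lt_mul_of_pos_left (add_lt_add_right hcot _) hcotθ

theorem stmt10 (n : ℕ) (hn : 3 ≤ n) (α γ : ℝ)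
    (h1 : 3*π/4 - π/(2*n) < α) (h2 : α < π) (h3 : π < γ) (h4 : γ < 5*π/4 - π/(2*n))
    (h5 : 2*π - π/n < α + γ) :
    (γ < dgn n α →
      (1/2) * Real.cot (π/n) * (Real.cot α + Real.cot γ)
        > (1/2) * Real.cot (π/n) * (Real.cot α + Real.cot (dgn n α))) ∧
    (1/2) * Real.cot (π/n) * (Real.cot α + Real.cot (dgn n α))
      = -(Real.cos (π/n))⁻¹ * (Real.sin (π/n) + 1) * Real.cot α :=
  stmt10_general n hn α γ h3
end

section
/- Let n ≥ 3 be an integer and suppose 3π/4 − π/(2n) < α < π < γ < 5π/4 − π/(2n), 2π − π/n < α + γ, and γ < dgn_n(α). Then the quadratic f(x) = x² − cot(π/n)(cot α + cot γ)x − cot α cot γ has no root x with −1 < x < 1 (indeed every real root satisfies x ≥ 1). -/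
open Real

private lemma aux_prod (sβ cβ sδ cδ sε cε : ℝ)
    (h : sε * ((sβ + 1)^2 * cδ) < cβ^2 * sδ * cε) :
    (1 + sβ)^2 * cδ * sε < cβ^2 * cε * sδ := by nlinarith [h]

private lemma aux_axis (sβ cβ Q P : ℝ) (hsβ : 0 < sβ) (hcβ : 0 < cβ) (hQ : 0 < Q)
    (hpyth : sβ^2 + cβ^2 = 1)
    (h₁ : (1 + sβ)^2 * Q < cβ^2 * P) (h₂ : cβ < (1 + sβ) * Q) :
    2 * sβ < cβ * (-Q + P) := by
  nlinarith [mul_lt_mul_of_pos_left h₂ (by positivity : (0:ℝ) < 2 * sβ),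
    mul_lt_mul_of_pos_left h₂ hcβ, h₁, mul_pos hsβ hQ]

private lemma aux_sign (z N M : ℝ) (heq : z * N = M) (hN : N < 0) (hM : M < 0) :
    0 < z := by nlinarith

private lemma aux_quad (x s p : ℝ) (hx : x^2 - s*x - p = 0)
    (hf : 0 < 1 - s - p) (hs : 2 < s) : 1 ≤ x := by
  by_contra hc
  push_neg at hc
  nlinarith [mul_pos (by linarith : (0:ℝ) < 1 - x) (by linarith : (0:ℝ) < s - 2)]

set_option maxHeartbeats 1000000 in
theorem stmt12 (n : ℕ) (hn : 3 ≤ n) (α γ : ℝ)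
    (h1 : 3*π/4 - π/(2*n) < α) (h2 : α < π) (h3 : π < γ) (h4 : γ < 5*π/4 - π/(2*n))
    (h5 : 2*π - π/n < α + γ) (h6 : γ < dgn n α) :
    ∀ x : ℝ, x^2 - Real.cot (π/n) * (Real.cot α + Real.cot γ) * x
        - Real.cot α * Real.cot γ = 0 → 1 ≤ x := by
  intro x hx
  have hπ : (0:ℝ) < π := Real.pi_pos
  have hn3 : (3:ℝ) ≤ (n:ℝ) := by exact_mod_cast hn
  have hn0 : (0:ℝ) < (n:ℝ) := by linarith
  set β : ℝ := π / n with hβdef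
  set k : ℝ := (Real.cos β)^2 * ((Real.sin β + 1)^2)⁻¹ with hkdef
  have hdgn : dgn n α = π - Real.arctan (k * Real.tan α) := by
    rw [dgn, ← hβdef, ← hkdef]
  have hβpos : 0 < β := by rw [hβdef]; positivity
  have hβle : β ≤ π / 3 := by
    rw [hβdef, div_le_div_iff₀ hn0 (by norm_num : (0:ℝ) < 3)]
    have := mul_le_mul_of_nonneg_left hn3 hπ.le
    linarith
  have hβn : π/(2*(n:ℝ)) = β/2 := by rw [hβdef]; ring
  have h5' : 2*π - β < α + γ := by rw [hβdef]; exact h5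
  rw [hβn] at h1 h4
  clear_value β
  have hsβ : 0 < Real.sin β := Real.sin_pos_of_pos_of_lt_pi hβpos (by linarith)
  have hcβ : 0 < Real.cos β := Real.cos_pos_of_mem_Ioo ⟨by linarith, by linarith⟩
  have hk : 0 < k := by rw [hkdef]; positivity
  -- δ = π - α
  set δ : ℝ := π - α with hδdef
  have hαδ : α = π - δ := by rw [hδdef]; ring
  clear_value δ
  have hδ0 : 0 < δ := by rw [hδdef]; linarith
  have hδub : δ < π/4 + β/2 := by rw [hδdef]; linarith
  have hδhalf : δ < π/2 := by linarith
  have hsδ : 0 < Real.sin δ := Real.sin_pos_of_pos_of_lt_pi hδ0 (by linarith)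
  have hcδ : 0 < Real.cos δ := Real.cos_pos_of_mem_Ioo ⟨by linarith, hδhalf⟩
  have htanα : Real.tan α = -Real.tan δ := by rw [hαδ, Real.tan_pi_sub]
  -- rewrite h6
  have h6' : γ - π < Real.arctan (k * Real.tan δ) := by
    rw [hdgn, htanα] at h6
    rw [show k * -Real.tan δ = -(k * Real.tan δ) by ring, Real.arctan_neg] at h6
    linarith
  set ε : ℝ := γ - π with hεdef
  have hγε : γ = ε + π := by rw [hεdef]; ring
  clear_value ε
  have hε0 : 0 < ε := by rw [hεdef]; linarith
  have hεhalf : ε < π/2 := lt_trans h6' (Real.arctan_lt_pi_div_two _)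
  have hsε : 0 < Real.sin ε := Real.sin_pos_of_pos_of_lt_pi hε0 (by linarith)
  have hcε : 0 < Real.cos ε := Real.cos_pos_of_mem_Ioo ⟨by linarith, hεhalf⟩
  -- tan ε < k tan δ
  have htanε : Real.tan ε < k * Real.tan δ := by
    have := Real.tan_lt_tan_of_nonneg_of_lt_pi_div_two (le_of_lt hε0)
      (Real.arctan_lt_pi_div_two _) h6'
    rwa [Real.tan_arctan] at this
  -- convert to product form
  have hprod : Real.sin ε * ((Real.sin β + 1)^2 * Real.cos δ)
      < (Real.cos β)^2 * Real.sin δ * Real.cos ε := by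
    have he1 : Real.tan ε = Real.sin ε / Real.cos ε := Real.tan_eq_sin_div_cos ε
    have he2 : k * Real.tan δ
        = ((Real.cos β)^2 * Real.sin δ) / ((Real.sin β + 1)^2 * Real.cos δ) := by
      rw [hkdef, Real.tan_eq_sin_div_cos]
      field_simp
    rw [he1, he2, div_lt_div_iff₀ hcε (by positivity)] at htanε
    linarith
  -- sin(δ - β) < cos δ
  have hsub : Real.sin (δ - β) < Real.cos δ := by
    rw [← Real.sin_pi_div_two_sub δ]
    apply Real.strictMonoOn_sin (Set.mem_Icc.mpr ⟨by linarith, by linarith⟩)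
      (Set.mem_Icc.mpr ⟨by linarith, by linarith⟩) (by linarith)
  have hsub' : Real.sin δ * Real.cos β < Real.cos δ * (1 + Real.sin β) := by
    rw [Real.sin_sub] at hsub; linarith
  -- cot values
  have hsinα : Real.sin α = Real.sin δ := by rw [hαδ, Real.sin_pi_sub]
  have hcosα : Real.cos α = -Real.cos δ := by rw [hαδ, Real.cos_pi_sub]
  have hsinγ : Real.sin γ = -Real.sin ε := by rw [hγε, Real.sin_add_pi]
  have hcosγ : Real.cos γ = -Real.cos ε := by rw [hγε, Real.cos_add_pi]
  have hcotα : Real.cot α = -(Real.cos δ / Real.sin δ) := by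
    rw [Real.cot_eq_cos_div_sin, hsinα, hcosα, neg_div]
  have hcotγ : Real.cot γ = Real.cos ε / Real.sin ε := by
    rw [Real.cot_eq_cos_div_sin, hsinγ, hcosγ, neg_div_neg_eq]
  have hcotβ : Real.cot β = Real.cos β / Real.sin β := Real.cot_eq_cos_div_sin β
  set Q : ℝ := Real.cos δ / Real.sin δ with hQdef
  set P : ℝ := Real.cos ε / Real.sin ε with hPdef
  clear_value Q P
  have hQ0 : 0 < Q := by rw [hQdef]; positivity
  have h₁ : (1 + Real.sin β)^2 * Q < (Real.cos β)^2 * P := by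
    rw [hQdef, hPdef, mul_div_assoc', mul_div_assoc', div_lt_div_iff₀ hsδ hsε]
    exact aux_prod _ _ _ _ _ _ hprod
  have h₂ : Real.cos β < (1 + Real.sin β) * Q := by
    rw [hQdef, mul_div_assoc', lt_div_iff₀ hsδ]
    linarith [hsub']
  -- axis > 2
  have hS : 2 < Real.cot β * (Real.cot α + Real.cot γ) := by
    rw [hcotβ, hcotα, hcotγ, div_mul_eq_mul_div, lt_div_iff₀ hsβ]
    exact aux_axis _ _ _ _ hsβ hcβ hQ0 (Real.sin_sq_add_cos_sq β) h₁ h₂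
  -- f(1) > 0
  have hsinαpos : 0 < Real.sin α := by rw [hsinα]; exact hsδ
  have hsinγneg : Real.sin γ < 0 := by rw [hsinγ]; linarith
  have hsum : 0 < Real.sin (α + γ + β) := by
    have h7 : α + γ + β = (α + γ + β - 2*π) + 2*π := by ring
    rw [h7, Real.sin_add_two_pi]
    apply Real.sin_pos_of_pos_of_lt_pi
    · linarith
    · linarith
  have heq : (1 - Real.cot β * (Real.cot α + Real.cot γ) - Real.cot α * Real.cot γ)
      * (Real.sin α * Real.sin γ * Real.sin β) = -Real.sin (α + γ + β) := by
    rw [hcotβ, hcotα, hcotγ, hQdef, hPdef,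
      Real.sin_add, Real.sin_add, Real.cos_add,
      hsinα, hsinγ, hcosα, hcosγ]
    field_simp
    ring
  have hf1 : 0 < 1 - Real.cot β * (Real.cot α + Real.cot γ)
      - Real.cot α * Real.cot γ :=
    aux_sign _ _ _ heq
      (mul_neg_of_neg_of_pos (mul_neg_of_pos_of_neg hsinαpos hsinγneg) hsβ)
      (by linarith)
  exact aux_quad x _ _ hx hf1 hS
end

section
/- Let n ≥ 3 and let α, γ ∈ (0, π/2) with α + γ > π/n. Then the quadratic f(x) = x² − cot(π/n)(cot α + cot γ)x − cot α cot γ has exactly one root in the open interval (−1, 0), namely the smaller root x = (1/2)cot(π/n)(cot α + cot γ) − (1/2)cot(π/n)·√Δ, where Δ = cot²γ + 2(2tan²(π/n)+1)cot α cot γ + cot²α. -/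
open Real

theorem stmt13_aux (c a g t : ℝ) (hc : 0 < c) (ha : 0 < a) (hg : 0 < g)
    (hct : c * t = 1) (key : a * g < c * (a + g) + 1) :
    ((1/2) * c * (a + g) - (1/2) * c * Real.sqrt (g^2 + 2*(2*t^2 + 1)*a*g + a^2))
        ∈ Set.Ioo (-1:ℝ) 0 ∧
    (((1/2) * c * (a + g) - (1/2) * c * Real.sqrt (g^2 + 2*(2*t^2 + 1)*a*g + a^2))^2
      - c * (a + g) * ((1/2) * c * (a + g)
          - (1/2) * c * Real.sqrt (g^2 + 2*(2*t^2 + 1)*a*g + a^2)) - a * g = 0) ∧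
    ∀ x ∈ Set.Ioo (-1:ℝ) 0, x^2 - c * (a + g) * x - a * g = 0 →
      x = (1/2) * c * (a + g) - (1/2) * c * Real.sqrt (g^2 + 2*(2*t^2 + 1)*a*g + a^2) := by
  have h1 : c^2 * t^2 = 1 := by
    calc c^2 * t^2 = (c*t)^2 := by ring
      _ = 1 := by rw [hct]; norm_num
  have hΔnn : 0 ≤ g^2 + 2*(2*t^2 + 1)*a*g + a^2 := by positivity
  have hDnn : 0 ≤ c^2 * (a+g)^2 + 4 * (a*g) := by positivity
  have hcΔ : c^2 * (g^2 + 2*(2*t^2 + 1)*a*g + a^2) = c^2 * (a+g)^2 + 4 * (a*g) := by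
    linear_combination (4*a*g) * h1
  have hcs : c * Real.sqrt (g^2 + 2*(2*t^2 + 1)*a*g + a^2)
      = Real.sqrt (c^2 * (a+g)^2 + 4 * (a*g)) := by
    rw [← hcΔ, Real.sqrt_mul (sq_nonneg c), Real.sqrt_sq hc.le]
  set S : ℝ := Real.sqrt (c^2 * (a+g)^2 + 4 * (a*g)) with hSdef
  have hSnn : 0 ≤ S := Real.sqrt_nonneg _
  have hsq : S^2 = c^2 * (a+g)^2 + 4 * (a*g) := Real.sq_sqrt hDnn
  have hr : (1/2) * c * (a + g) - (1/2) * c * Real.sqrt (g^2 + 2*(2*t^2 + 1)*a*g + a^2)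
      = (c * (a + g) - S) / 2 := by rw [← hcs]; ring
  have hP : 0 < c * (a + g) := by positivity
  have hsqpos : c * (a + g) < S := by
    nlinarith [hsq, hSnn]
  have hsqlt : S < c * (a + g) + 2 := by
    nlinarith [hsq, hSnn]
  refine ⟨⟨by rw [hr]; linarith, by rw [hr]; linarith⟩, ?_, ?_⟩
  · rw [hr]; linear_combination (1/4 : ℝ) * hsq
  · intro x hx hfx
    have hfactor : (x - (c * (a + g) - S) / 2) * (x - (c * (a + g) + S) / 2) = 0 := by
      linear_combination hfx - (1/4 : ℝ) * hsq
    have hx2 : x - (c * (a + g) + S) / 2 < 0 := by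
      have h0 : 0 < c * (a + g) + S := by linarith
      linarith [hx.2]
    rw [hr]
    rcases mul_eq_zero.mp hfactor with h1 | h1
    · linarith
    · linarith

theorem stmt13 (n : ℕ) (hn : 3 ≤ n) (α γ : ℝ)
    (hα : α ∈ Set.Ioo 0 (π/2)) (hγ : γ ∈ Set.Ioo 0 (π/2)) (h : α + γ > π/n) :
    (let f : ℝ → ℝ := fun x =>
        x^2 - Real.cot (π/n) * (Real.cot α + Real.cot γ) * x - Real.cot α * Real.cot γ
     let Δ : ℝ := (Real.cot γ)^2 + 2*(2*(Real.tan (π/n))^2 + 1) * Real.cot α * Real.cot γ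
        + (Real.cot α)^2
     let r : ℝ := (1/2) * Real.cot (π/n) * (Real.cot α + Real.cot γ)
        - (1/2) * Real.cot (π/n) * Real.sqrt Δ
     r ∈ Set.Ioo (-1:ℝ) 0 ∧ f r = 0 ∧ ∀ x ∈ Set.Ioo (-1:ℝ) 0, f x = 0 → x = r) := by
  intro f Δ r
  obtain ⟨hα1, hα2⟩ := hα
  obtain ⟨hγ1, hγ2⟩ := hγ
  have hπ : (0:ℝ) < π := Real.pi_pos
  have hn' : (3:ℝ) ≤ (n:ℝ) := by exact_mod_cast hn
  have hs0 : 0 < π / (n:ℝ) := by positivity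
  have hs3 : π / (n:ℝ) ≤ π / 3 := by
    apply div_le_div_of_nonneg_left hπ.le (by norm_num) hn'
  have hs2 : π / (n:ℝ) < π / 2 := lt_of_le_of_lt hs3 (by linarith)
  have hsins : 0 < Real.sin (π/n) := Real.sin_pos_of_pos_of_lt_pi hs0 (by linarith)
  have hcoss : 0 < Real.cos (π/n) := Real.cos_pos_of_mem_Ioo ⟨by linarith, hs2⟩
  have hsina : 0 < Real.sin α := Real.sin_pos_of_pos_of_lt_pi hα1 (by linarith)
  have hcosa : 0 < Real.cos α := Real.cos_pos_of_mem_Ioo ⟨by linarith, hα2⟩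
  have hsing : 0 < Real.sin γ := Real.sin_pos_of_pos_of_lt_pi hγ1 (by linarith)
  have hcosg : 0 < Real.cos γ := Real.cos_pos_of_mem_Ioo ⟨by linarith, hγ2⟩
  have hc : 0 < Real.cot (π/n) := by rw [Real.cot_eq_cos_div_sin]; positivity
  have ha : 0 < Real.cot α := by rw [Real.cot_eq_cos_div_sin]; positivity
  have hg : 0 < Real.cot γ := by rw [Real.cot_eq_cos_div_sin]; positivity
  have hct : Real.cot (π/n) * Real.tan (π/n) = 1 := by
    rw [Real.cot_eq_cos_div_sin, Real.tan_eq_sin_div_cos]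
    field_simp
  have key : Real.cot α * Real.cot γ
      < Real.cot (π/n) * (Real.cot α + Real.cot γ) + 1 := by
    have hid : Real.sin (α + γ - π/n) =
        (1 + Real.cot (π/n) * (Real.cot α + Real.cot γ) - Real.cot α * Real.cot γ)
          * (Real.sin (π/n) * Real.sin α * Real.sin γ) := by
      rw [Real.sin_sub, Real.sin_add, Real.cos_add]
      simp only [Real.cot_eq_cos_div_sin]
      field_simp
      ring
    have hpos : 0 < Real.sin (α + γ - π/n) := by
      apply Real.sin_pos_of_pos_of_lt_pi
      · linarith
      · linarith
    nlinarith [mul_pos (mul_pos hsins hsina) hsing]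
  exact stmt13_aux (Real.cot (π/n)) (Real.cot α) (Real.cot γ) (Real.tan (π/n))
    hc ha hg hct key
end

section
/- Let n ≥ 3 and let α, γ ∈ (π/2, π) with α + γ < 2π − π/n. Then the quadratic f(x) = x² − cot(π/n)(cot α + cot γ)x − cot α cot γ has exactly one root in the open interval (0, 1). -/
open Real

theorem stmt14 (n : ℕ) (hn : 3 ≤ n) (α γ : ℝ)
    (hα : α ∈ Set.Ioo (π/2) π) (hγ : γ ∈ Set.Ioo (π/2) π) (h : α + γ < 2*π - π/n) :
    ∃! x : ℝ, x ∈ Set.Ioo (0:ℝ) 1 ∧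
      x^2 - Real.cot (π/n) * (Real.cot α + Real.cot γ) * x - Real.cot α * Real.cot γ = 0 := by
  obtain ⟨hα1, hα2⟩ := hα
  obtain ⟨hγ1, hγ2⟩ := hγ
  have hπ := Real.pi_pos
  have hn0 : (0:ℝ) < n := by positivity
  have hn3 : (3:ℝ) ≤ n := by exact_mod_cast hn
  have hpn_pos : 0 < π / n := by positivity
  have hpn_lt : π / n < π := by
    rw [div_lt_iff₀ hn0]
    nlinarith
  have hsα : 0 < Real.sin α := Real.sin_pos_of_pos_of_lt_pi (by linarith) hα2
  have hsγ : 0 < Real.sin γ := Real.sin_pos_of_pos_of_lt_pi (by linarith) hγ2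
  have hsn : 0 < Real.sin (π / n) := Real.sin_pos_of_pos_of_lt_pi hpn_pos hpn_lt
  have hcα : Real.cos α < 0 := Real.cos_neg_of_pi_div_two_lt_of_lt hα1 (by linarith)
  have hcγ : Real.cos γ < 0 := Real.cos_neg_of_pi_div_two_lt_of_lt hγ1 (by linarith)
  have hcotα : Real.cot α < 0 := by
    rw [Real.cot_eq_cos_div_sin]; exact div_neg_of_neg_of_pos hcα hsα
  have hcotγ : Real.cot γ < 0 := by
    rw [Real.cot_eq_cos_div_sin]; exact div_neg_of_neg_of_pos hcγ hsγ
  set B := Real.cot (π/n) * (Real.cot α + Real.cot γ) with hB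
  set C := Real.cot α * Real.cot γ with hC
  have hCpos : 0 < C := mul_pos_of_neg_of_neg hcotα hcotγ
  -- f(1) > 0
  have hsin_neg : Real.sin (α + γ + π / n) < 0 := by
    have h1 : 0 < α + γ + π / n - π := by linarith
    have h2 : α + γ + π / n - π < π := by linarith
    have := Real.sin_pos_of_pos_of_lt_pi h1 h2
    rw [Real.sin_sub_pi] at this
    linarith
  have key : (1 - B - C) * (Real.sin α * Real.sin γ * Real.sin (π / n)) =
      -Real.sin (α + γ + π / n) := by
    rw [hB, hC, Real.cot_eq_cos_div_sin, Real.cot_eq_cos_div_sin, Real.cot_eq_cos_div_sin,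
      Real.sin_add, Real.sin_add, Real.cos_add]
    field_simp
    ring
  have hf1 : 0 < 1 - B - C := by
    have hprod : 0 < (1 - B - C) * (Real.sin α * Real.sin γ * Real.sin (π / n)) := by
      rw [key]; linarith
    have hpos : 0 < Real.sin α * Real.sin γ * Real.sin (π / n) := by positivity
    rcases mul_pos_iff.mp hprod with h' | h'
    · exact h'.1
    · linarith [h'.2]
  -- existence via IVT
  have hcont : ContinuousOn (fun x : ℝ => x^2 - B * x - C) (Set.Icc 0 1) := by
    fun_prop
  have hiv := intermediate_value_Ioo (by norm_num : (0:ℝ) ≤ 1) hcont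
  have h0mem : (0:ℝ) ∈ Set.Ioo ((fun x : ℝ => x^2 - B * x - C) 0)
      ((fun x : ℝ => x^2 - B * x - C) 1) := by
    constructor <;> simp <;> nlinarith
  obtain ⟨x, hx, hfx⟩ := hiv h0mem
  refine ⟨x, ⟨hx, by simpa using hfx⟩, ?_⟩
  rintro y ⟨⟨hy0, hy1⟩, hfy⟩
  obtain ⟨hx0, hx1⟩ := hx
  simp only at hfx
  by_contra hne
  have hsum : y + x = B := by
    have hfac : (y - x) * (y + x - B) = 0 := by linear_combination hfy - hfx
    rcases mul_eq_zero.mp hfac with h' | h'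
    · exact absurd (by linarith : y = x) hne
    · linarith
  have hxy : x * y = -C := by linear_combination -hfx + x * hsum
  have := mul_pos hx0 hy0
  linarith
end

section
/- Let n ≥ 3 and suppose π/2 < α < 3π/4 − π/(2n), π < γ < 3π/2, α + γ > 2π − π/n, and γ ≤ dgn_n(α) with Δ(α,γ) ≥ 0. Then 0 < (1/2)·cot(π/n)·(cot α + cot γ) < 1, i.e., the axis of the quadratic f lies strictly between 0 and 1. -/
open Real

/-!
Write `t = π/n`. The condition `γ ≤ dgn n α` forces `α + γ < 2π`, because the coefficient
`cos² t / (sin t + 1)²` is below `1` and `tan α < 0`. Then `α + γ ∈ (3π/2, 2π)`, so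
`cot α + cot γ = sin (α + γ) / (sin α sin γ) > 0`. For the upper bound, `α + γ + t > 2π` gives
`cot γ < -cot (α + t)`, and `cot t (cot α - cot (α + t)) = 1 + cot α cot (α + t) < 2` because
`α + (α + t) < 3π/2`.
-/

namespace Real

lemma sin_neg_of_pi_lt_of_lt_two_pi {x : ℝ} (h₁ : π < x) (h₂ : x < 2 * π) : sin x < 0 := by
  rw [← sin_sub_two_pi]
  exact sin_neg_of_neg_of_neg_pi_lt (by linarith) (by linarith)

lemma sin_pos_of_two_pi_lt_of_lt_three_pi {x : ℝ} (h₁ : 2 * π < x) (h₂ : x < 3 * π) :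
    0 < sin x := by
  rw [← sin_sub_two_pi]
  exact sin_pos_of_pos_of_lt_pi (by linarith) (by linarith)

lemma cot_add_cot {x y : ℝ} (hx : sin x ≠ 0) (hy : sin y ≠ 0) :
    cot x + cot y = sin (x + y) / (sin x * sin y) := by
  rw [cot_eq_cos_div_sin, cot_eq_cos_div_sin, sin_add]
  field_simp
  ring

/-- The cotangent subtraction formula `cot (a - b) = (cot a cot b + 1) / (cot b - cot a)`,
with `a = x + t`, `b = x`, cleared of denominators. -/
lemma cot_mul_sub_cot_add {x t : ℝ} (hx : sin x ≠ 0) (hxt : sin (x + t) ≠ 0) (ht : sin t ≠ 0) :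
    cot t * (cot x - cot (x + t)) = 1 + cot x * cot (x + t) := by
  have hsin : sin t = sin (x + t) * cos x - cos (x + t) * sin x := by
    rw [← sin_sub, add_sub_cancel_left]
  have hcos : cos t = cos (x + t) * cos x + sin (x + t) * sin x := by
    rw [← cos_sub, add_sub_cancel_left]
  simp only [cot_eq_cos_div_sin]
  field_simp
  rw [hsin, hcos]
  ring

lemma cot_mul_cot_lt_one {x y : ℝ} (hx : 0 < sin x) (hy : 0 < sin y) (h : cos (x + y) < 0) :
    cot x * cot y < 1 := by
  rw [cot_eq_cos_div_sin, cot_eq_cos_div_sin, div_mul_div_comm, div_lt_one (by positivity)]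
  rw [cos_add] at h
  linarith

lemma sub_pi_lt_arctan_mul_tan {c α : ℝ} (hc : c < 1) (h₁ : π / 2 < α) (h₂ : α < π) :
    α - π < arctan (c * tan α) := by
  have htan : tan (α - π) < 0 := tan_neg_of_neg_of_pi_div_two_lt (by linarith) (by linarith)
  calc α - π = arctan (tan (α - π)) := (arctan_tan (by linarith) (by linarith)).symm
    _ < arctan (c * tan (α - π)) := arctan_strictMono (by nlinarith)
    _ = arctan (c * tan α) := by rw [tan_sub_pi]

lemma cos_sq_mul_inv_sin_add_one_sq_lt_one {t : ℝ} (ht : 0 < sin t) :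
    cos t ^ 2 * ((sin t + 1) ^ 2)⁻¹ < 1 := by
  rw [mul_inv_lt_iff₀ (by positivity), cos_sq']
  nlinarith

end Real

lemma add_lt_two_pi_of_le_dgn {n : ℕ} {α γ : ℝ} (hn : 2 ≤ n) (h₁ : π / 2 < α) (h₂ : α < π)
    (h : γ ≤ dgn n α) : α + γ < 2 * π := by
  have hn' : (2 : ℝ) ≤ n := by exact_mod_cast hn
  have ht : 0 < sin (π / n) := sin_pos_of_pos_of_lt_pi (by positivity) <| by
    rw [div_lt_iff₀ (by positivity)]
    nlinarith [pi_pos]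
  have := sub_pi_lt_arctan_mul_tan (cos_sq_mul_inv_sin_add_one_sq_lt_one ht) h₁ h₂
  unfold dgn at h
  linarith

lemma cot_mul_cot_add_cot_lt_two {t α γ : ℝ} (ht : 0 < t) (h₁ : π / 2 < α)
    (h₂ : 2 * α + t < 3 * π / 2) (h₃ : π < γ) (h₄ : γ < 2 * π) (h₅ : 2 * π < α + γ + t) :
    cot t * (cot α + cot γ) < 2 := by
  have hsα : 0 < sin α := sin_pos_of_pos_of_lt_pi (by linarith) (by linarith)
  have hsαt : 0 < sin (α + t) := sin_pos_of_pos_of_lt_pi (by linarith) (by linarith)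
  have hst : 0 < sin t := sin_pos_of_pos_of_lt_pi ht (by linarith)
  have hcot : 0 < cot t := by
    rw [cot_eq_cos_div_sin]
    exact div_pos (cos_pos_of_mem_Ioo ⟨by linarith, by linarith⟩) hst
  have hsγ : sin γ < 0 := sin_neg_of_pi_lt_of_lt_two_pi h₃ h₄
  have hγ : cot γ < -cot (α + t) := by
    have hsum : cot γ + cot (α + t) < 0 := by
      rw [cot_add_cot hsγ.ne hsαt.ne']
      exact div_neg_of_pos_of_neg (sin_pos_of_two_pi_lt_of_lt_three_pi (by linarith) (by linarith))
        (mul_neg_of_neg_of_pos hsγ hsαt)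
    linarith
  have hprod : cot α * cot (α + t) < 1 :=
    cot_mul_cot_lt_one hsα hsαt (cos_neg_of_pi_div_two_lt_of_lt (by linarith) (by linarith))
  calc cot t * (cot α + cot γ) < cot t * (cot α - cot (α + t)) := by gcongr; linarith
    _ = 1 + cot α * cot (α + t) := cot_mul_sub_cot_add hsα.ne' hsαt.ne' hst.ne'
    _ < 2 := by linarith

theorem stmt15_general (n : ℕ) (hn : 3 ≤ n) (α γ : ℝ)
    (h1 : π/2 < α) (h2 : α < 3*π/4 - π/(2*n)) (h3 : π < γ) (h4 : γ < 3*π/2)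
    (h5 : α + γ > 2*π - π/n) (h6 : γ ≤ dgn n α) :
    0 < (1/2) * Real.cot (π/n) * (Real.cot α + Real.cot γ) ∧
    (1/2) * Real.cot (π/n) * (Real.cot α + Real.cot γ) < 1 := by
  have hn' : (3 : ℝ) ≤ n := by exact_mod_cast hn
  have ht : 0 < π / n := by positivity
  have ht' : π / n < π / 2 := div_lt_div_of_pos_left pi_pos two_pos (by linarith)
  have h2' : 2 * α + π / n < 3 * π / 2 := by
    rw [show π / (2 * n) = π / n / 2 by ring] at h2
    linarith
  have hsum : α + γ < 2 * π := add_lt_two_pi_of_le_dgn (by omega) h1 (by linarith) h6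
  have hsα : 0 < sin α := sin_pos_of_pos_of_lt_pi (by linarith) (by linarith)
  have hsγ : sin γ < 0 := sin_neg_of_pi_lt_of_lt_two_pi h3 (by linarith)
  have hcot : 0 < cot (π / n) := by
    rw [cot_eq_cos_div_sin]
    exact div_pos (cos_pos_of_mem_Ioo ⟨by linarith, ht'⟩) (sin_pos_of_pos_of_lt_pi ht (by linarith))
  have hpos : 0 < cot α + cot γ := by
    rw [cot_add_cot hsα.ne' hsγ.ne]
    exact div_pos_of_neg_of_neg (sin_neg_of_pi_lt_of_lt_two_pi (by linarith) hsum)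
      (mul_neg_of_pos_of_neg hsα hsγ)
  have hlt := cot_mul_cot_add_cot_lt_two ht h1 h2' h3 (by linarith) (by linarith)
  constructor
  · positivity
  · linarith

theorem stmt15 (n : ℕ) (hn : 3 ≤ n) (α γ : ℝ)
    (h1 : π/2 < α) (h2 : α < 3*π/4 - π/(2*n)) (h3 : π < γ) (h4 : γ < 3*π/2)
    (h5 : α + γ > 2*π - π/n) (h6 : γ ≤ dgn n α)
    (h7 : (Real.cot γ)^2 + 2*(2*(Real.tan (π/n))^2 + 1) * Real.cot α * Real.cot γ
        + (Real.cot α)^2 ≥ 0) :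
    0 < (1/2) * Real.cot (π/n) * (Real.cot α + Real.cot γ) ∧
    (1/2) * Real.cot (π/n) * (Real.cot α + Real.cot γ) < 1 :=
  stmt15_general n hn α γ h1 h2 h3 h4 h5 h6
end
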